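/- arXiv:quant-ph/0006061 — 7 statements merged into one kernel-verified Lean document; each statement's English description precedes it below -/
import Mathlib

section
/- Let n ≥ 1, let D ⊆ D' ⊆ 𝔽₂ⁿ be binary linear codes with D^⊥ ⊆ D (dual with respect to the standard dot product), let U ⊆ 𝔽₂ⁿ be an 𝔽₂-subspace with D ∩ U = {0} and D + U = D', and let ρ : U → U be an 𝔽₂-linear bijection. Let C = {(a + u, b + ρ(u)) : a, b ∈ D, u ∈ U} ⊆ 𝔽₂ⁿ × 𝔽₂ⁿ be the Steane code, and let C^ω = {z ∈ 𝔽₂ⁿ × 𝔽₂ⁿ : ω(z, c) = 0 for all c ∈ C} be its dual with respect to the symplectic form ω((x,y),(x',y')) = Σⱼ (xⱼ y'ⱼ + x'ⱼ yⱼ). Then C^ω ⊆ C, i.e., C is a large symplectic code. -/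
/-- Steane's construction yields a large symplectic code: the symplectic dual
of `C = {(a+u, b+ρu) : a,b ∈ D, u ∈ U}` is contained in `C`. -/
theorem steane_large_symplectic
    (n : ℕ) (hn : 1 ≤ n)
    (D D' U : Submodule (ZMod 2) (Fin n → ZMod 2))
    (hDD' : D ≤ D')
    (hdual : ∀ x : Fin n → ZMod 2, (∀ y ∈ D, ∑ j, x j * y j = 0) → x ∈ D)
    (hDU : D ⊓ U = ⊥) (hsup : D ⊔ U = D')
    (ρ : U ≃ₗ[ZMod 2] U)
    (C : Set ((Fin n → ZMod 2) × (Fin n → ZMod 2)))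
    (hC : C = {z | ∃ a ∈ D, ∃ b ∈ D, ∃ u : U,
        z = (a + (u : Fin n → ZMod 2), b + ((ρ u : U) : Fin n → ZMod 2))}) :
    {z : (Fin n → ZMod 2) × (Fin n → ZMod 2) |
        ∀ c ∈ C, ∑ j, (z.1 j * c.2 j + c.1 j * z.2 j) = 0} ⊆ C := by
  intro z hz
  simp only [Set.mem_setOf_eq] at hz
  have h1 : z.1 ∈ D := by
    apply hdual
    intro y hy
    have hc : ((0 : Fin n → ZMod 2), y) ∈ C := by
      rw [hC]
      exact ⟨0, D.zero_mem, y, hy, 0, by simp⟩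
    have := hz _ hc
    simpa using this
  have h2 : z.2 ∈ D := by
    apply hdual
    intro y hy
    have hc : (y, (0 : Fin n → ZMod 2)) ∈ C := by
      rw [hC]
      exact ⟨y, hy, 0, D.zero_mem, 0, by simp⟩
    have := hz _ hc
    simp only [Pi.zero_apply, mul_zero, zero_add] at this
    rw [← this]
    exact Finset.sum_congr rfl fun j _ => mul_comm _ _
  rw [hC]
  exact ⟨z.1, h1, z.2, h2, 0, by simp⟩
end

section
/- Let n ≥ 1, let D ⊆ D' ⊆ 𝔽₂ⁿ be binary linear codes with dim D' ≥ dim D + 2, let U ⊆ 𝔽₂ⁿ be an 𝔽₂-subspace with D ∩ U = {0} and D + U = D', and let ρ : U → U be an 𝔽₂-linear bijection such that u + ρ(u) ∉ D for every nonzero u ∈ U. Let C = {(a + u, b + ρ(u)) : a, b ∈ D, u ∈ U} ⊆ 𝔽₂ⁿ × 𝔽₂ⁿ. Let d be the minimum Hamming weight of a nonzero codeword of D, and let d'₂ be the minimum of |supp(u) ∪ supp(v)| over all pairs of distinct nonzero codewords u, v of D'. Then for every nonzero (x, y) ∈ C, the number of indices j with (xⱼ, yⱼ) ≠ (0,0)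 is at least min(d, d'₂). -/
/-- Distance claim of Steane's construction: every nonzero codeword of the
Steane code `C = {(a+u, b+ρu)}` has `𝔽₄`-weight at least `min d d'₂`, where
`d` is the minimum distance of `D` and `d'₂` the second generalized weight
of `D'`. -/
theorem steane_distance
    (n : ℕ) (hn : 1 ≤ n)
    (D D' U : Submodule (ZMod 2) (Fin n → ZMod 2))
    (hDD' : D ≤ D')
    (hdim : Module.finrank (ZMod 2) D + 2 ≤ Module.finrank (ZMod 2) D')
    (hDU : D ⊓ U = ⊥) (hsup : D ⊔ U = D')
    (ρ : U ≃ₗ[ZMod 2] U)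
    (hρ : ∀ u : U, u ≠ 0 →
      (u : Fin n → ZMod 2) + ((ρ u : U) : Fin n → ZMod 2) ∉ D)
    (C : Set ((Fin n → ZMod 2) × (Fin n → ZMod 2)))
    (hC : C = {z | ∃ a ∈ D, ∃ b ∈ D, ∃ u : U,
        z = (a + (u : Fin n → ZMod 2), b + ((ρ u : U) : Fin n → ZMod 2))})
    (d d2 : ℕ)
    (hd : d = sInf {w | ∃ x ∈ D, x ≠ (0 : Fin n → ZMod 2) ∧
        w = {j | x j ≠ 0}.ncard})
    (hd2 : d2 = sInf {w | ∃ u ∈ D', ∃ v ∈ D', u ≠ (0 : Fin n → ZMod 2) ∧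
        v ≠ (0 : Fin n → ZMod 2) ∧ u ≠ v ∧
        w = ({j | u j ≠ 0} ∪ {j | v j ≠ 0}).ncard}) :
    ∀ z ∈ C, z ≠ (0, 0) →
      min d d2 ≤ {j | (z.1 j, z.2 j) ≠ ((0 : ZMod 2), (0 : ZMod 2))}.ncard := by
  subst hC hd hd2
  rintro z ⟨a, ha, b, hb, u, rfl⟩ hz0
  by_cases hu : u = 0
  · subst hu
    simp only [map_zero, ZeroMemClass.coe_zero, add_zero] at hz0 ⊢
    have hab : a ≠ 0 ∨ b ≠ 0 := by
      by_contra h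
      push_neg at h
      exact hz0 (by simp [h.1, h.2])
    rcases hab with h | h
    · refine le_trans (min_le_left _ _)
        (le_trans (Nat.sInf_le ⟨a, ha, h, rfl⟩) ?_)
      refine Set.ncard_le_ncard ?_ (Set.toFinite _)
      intro j hj
      simp only [Set.mem_setOf_eq, ne_eq, Prod.mk.injEq, not_and] at hj ⊢
      exact fun hja => absurd hja hj
    · refine le_trans (min_le_left _ _)
        (le_trans (Nat.sInf_le ⟨b, hb, h, rfl⟩) ?_)
      refine Set.ncard_le_ncard ?_ (Set.toFinite _)
      intro j hj
      simp only [Set.mem_setOf_eq, ne_eq, Prod.mk.injEq, not_and] at hj ⊢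
      intro _ hjb
      exact hj hjb
  · have hUle : U ≤ D' := hsup ▸ le_sup_right
    have hucoe : (u : Fin n → ZMod 2) ≠ 0 := by
      simpa [ZeroMemClass.coe_eq_zero] using hu
    have hρu : ρ u ≠ 0 := fun h => hu (by simpa using ρ.injective (by simpa using h))
    have hρucoe : ((ρ u : U) : Fin n → ZMod 2) ≠ 0 := by
      simpa [ZeroMemClass.coe_eq_zero] using hρu
    have hx : a + (u : Fin n → ZMod 2) ∈ D' := D'.add_mem (hDD' ha) (hUle u.2)
    have hy : b + ((ρ u : U) : Fin n → ZMod 2) ∈ D' :=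
      D'.add_mem (hDD' hb) (hUle (ρ u).2)
    have hx0 : a + (u : Fin n → ZMod 2) ≠ 0 := by
      intro h
      have hmem : (u : Fin n → ZMod 2) ∈ D ⊓ U := by
        refine ⟨?_, u.2⟩
        have : (u : Fin n → ZMod 2) = a := by
          funext j
          have hj := congrFun h j
          simp only [Pi.add_apply, Pi.zero_apply] at hj ⊢
          revert hj
          generalize a j = p; generalize (u : Fin n → ZMod 2) j = q
          revert p q; decide
        rw [this]; exact ha
      rw [hDU] at hmem
      exact hucoe (by simpa using hmem)
    have hy0 : b + ((ρ u : U) : Fin n → ZMod 2) ≠ 0 := by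
      intro h
      have hmem : ((ρ u : U) : Fin n → ZMod 2) ∈ D ⊓ U := by
        refine ⟨?_, (ρ u).2⟩
        have : ((ρ u : U) : Fin n → ZMod 2) = b := by
          funext j
          have hj := congrFun h j
          simp only [Pi.add_apply, Pi.zero_apply] at hj ⊢
          revert hj
          generalize b j = p; generalize ((ρ u : U) : Fin n → ZMod 2) j = q
          revert p q; decide
        rw [this]; exact hb
      rw [hDU] at hmem
      exact hρucoe (by simpa using hmem)
    have hxy : a + (u : Fin n → ZMod 2) ≠ b + ((ρ u : U) : Fin n → ZMod 2) := by
      intro h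
      apply hρ u hu
      have key : (u : Fin n → ZMod 2) + ((ρ u : U) : Fin n → ZMod 2) = a + b := by
        funext j
        have hj := congrFun h j
        simp only [Pi.add_apply] at hj ⊢
        revert hj
        generalize a j = p; generalize b j = q
        generalize (u : Fin n → ZMod 2) j = r
        generalize ((ρ u : U) : Fin n → ZMod 2) j = s
        revert p q r s; decide
      rw [key]; exact D.add_mem ha hb
    refine le_trans (min_le_right _ _)
      (le_trans (Nat.sInf_le ⟨_, hx, _, hy, hx0, hy0, hxy, rfl⟩) ?_)
    refine le_of_eq (congrArg Set.ncard ?_)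
    ext j
    simp only [Set.mem_union, Set.mem_setOf_eq, ne_eq, Prod.mk.injEq, not_and]
    by_cases h1 : (a + (u : Fin n → ZMod 2)) j = 0 <;>
      by_cases h2 : (b + ((ρ u : U) : Fin n → ZMod 2)) j = 0 <;> simp only [Pi.add_apply] at h1 h2 ⊢ <;> simp [h1, h2] <;> tauto
end

section
/- Let n ≥ 1 and let D ⊆ D' ⊆ 𝔽₂ⁿ be binary linear codes with D^⊥ ⊆ D and dim D' ≥ dim D + 2. Let d be the minimum Hamming weight of a nonzero codeword of D and d' the minimum Hamming weight of a nonzero codeword of D'. Then there exists an 𝔽₂-subspace F ⊆ 𝔽₂ⁿ × 𝔽₂ⁿ such that: (i) F^ω ⊆ F, where F^ω is the dual of F with respect to the symplectic form ω((x,y),(x',y')) = Σⱼ (xⱼ y'ⱼ + x'ⱼ yⱼ); (ii) dim F = dim D + dim D'; and (iii) every nonzero (x,y) ∈ F satisfies 2·|supp(x) ∪ supp(y)| ≥ min(2d, 3d'). -/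
set_option maxHeartbeats 1000000

lemma two_mul_ncard_union {n : ℕ} (a b : Fin n → ZMod 2) :
    2 * ({j | a j ≠ 0} ∪ {j | b j ≠ 0}).ncard =
    {j | a j ≠ 0}.ncard + {j | b j ≠ 0}.ncard + {j | (a + b) j ≠ 0}.ncard := by
  classical
  set A := {j : Fin n | a j ≠ 0} with hA
  set B := {j : Fin n | b j ≠ 0} with hB
  have h1 : (A ∪ B).ncard + (A ∩ B).ncard = A.ncard + B.ncard :=
    Set.ncard_union_add_ncard_inter A B (Set.toFinite A) (Set.toFinite B)
  have hC : {j : Fin n | (a + b) j ≠ 0} = (A ∪ B) \ (A ∩ B) := by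
    ext j
    simp only [Set.mem_setOf_eq, Set.mem_diff, Set.mem_union, Set.mem_inter_iff, hA, hB,
      Pi.add_apply, Set.mem_setOf_eq]
    exact (by decide : ∀ x y : ZMod 2,
      x + y ≠ 0 ↔ (x ≠ 0 ∨ y ≠ 0) ∧ ¬(x ≠ 0 ∧ y ≠ 0)) (a j) (b j)
  have h2 : ((A ∪ B) \ (A ∩ B)).ncard + (A ∩ B).ncard = (A ∪ B).ncard :=
    Set.ncard_diff_add_ncard_of_subset (Set.inter_subset_left.trans Set.subset_union_left)
      (Set.toFinite _)
  rw [hC, ← h1, ← h2]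
  ring

/-- Steane's construction (Theorem 2 and Corollary 1 combined): from a pair
`D ⊆ D'` of binary codes with `D^⊥ ⊆ D` and `dim D' ≥ dim D + 2` one obtains
a large symplectic code `F` with `dim F = dim D + dim D'` whose nonzero
elements `(x,y)` satisfy `2·|supp x ∪ supp y| ≥ min(2d, 3d')`. -/
theorem steane_quantum_code
    (n : ℕ) (hn : 1 ≤ n)
    (D D' : Submodule (ZMod 2) (Fin n → ZMod 2))
    (hDD' : D ≤ D')
    (hdual : ∀ x : Fin n → ZMod 2, (∀ y ∈ D, ∑ j, x j * y j = 0) → x ∈ D)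
    (hdim : Module.finrank (ZMod 2) D + 2 ≤ Module.finrank (ZMod 2) D')
    (d d' : ℕ)
    (hd : d = sInf {w | ∃ x ∈ D, x ≠ (0 : Fin n → ZMod 2) ∧
        w = {j | x j ≠ 0}.ncard})
    (hd' : d' = sInf {w | ∃ x ∈ D', x ≠ (0 : Fin n → ZMod 2) ∧
        w = {j | x j ≠ 0}.ncard}) :
    ∃ F : Submodule (ZMod 2) ((Fin n → ZMod 2) × (Fin n → ZMod 2)),
      ({z : (Fin n → ZMod 2) × (Fin n → ZMod 2) |
          ∀ c ∈ F, ∑ j, (z.1 j * c.2 j + c.1 j * z.2 j) = 0} ⊆ (F : Set _)) ∧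
      Module.finrank (ZMod 2) F =
        Module.finrank (ZMod 2) D + Module.finrank (ZMod 2) D' ∧
      ∀ z ∈ F, z ≠ 0 →
        min (2 * d) (3 * d') ≤ 2 * ({j | z.1 j ≠ 0} ∪ {j | z.2 j ≠ 0}).ncard := by
    classical
  haveI : Fact (Nat.Prime 2) := ⟨by norm_num⟩
  -- a complement W of D inside D'
  obtain ⟨W₀, hW₀⟩ := Submodule.exists_isCompl (D.comap D'.subtype)
  set W : Submodule (ZMod 2) (Fin n → ZMod 2) := W₀.map D'.subtype with hWdef
  have hWD' : W ≤ D' := by rintro x ⟨y, -, rfl⟩; exact y.2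
  have hDW : ∀ x : Fin n → ZMod 2, x ∈ D → x ∈ W → x = 0 := by
    rintro x hxD ⟨y, hy, rfl⟩
    have hmem : y ∈ D.comap D'.subtype ⊓ W₀ := ⟨hxD, hy⟩
    rw [hW₀.disjoint.eq_bot, Submodule.mem_bot] at hmem
    rw [hmem]; rfl
  have hmapD : (D.comap D'.subtype).map D'.subtype = D := by
    rw [Submodule.map_comap_subtype, inf_eq_right.mpr hDD']
  have hWrank : Module.finrank (ZMod 2) D + Module.finrank (ZMod 2) W = Module.finrank (ZMod 2) D' := by
    have h1 : Module.finrank (ZMod 2) (D.comap D'.subtype) + Module.finrank (ZMod 2) W₀ =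
        Module.finrank (ZMod 2) D' := Submodule.finrank_add_eq_of_isCompl hW₀
    have h2 : Module.finrank (ZMod 2) W = Module.finrank (ZMod 2) W₀ :=
      Submodule.finrank_map_subtype_eq D' W₀
    have h3 : Module.finrank (ZMod 2) (D.comap D'.subtype) = Module.finrank (ZMod 2) D := by
      conv_rhs => rw [← hmapD]
      exact (Submodule.finrank_map_subtype_eq D' _).symm
    rw [h2, ← h3]; exact h1
  obtain ⟨m, hm⟩ : ∃ m, Module.finrank (ZMod 2) W = m := ⟨_, rfl⟩
  rw [hm] at hWrank
  have hm2 : 2 ≤ m := by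
    rw [← hWrank] at hdim; exact le_of_add_le_add_left hdim
  have hm0 : m ≠ 0 := by clear hd hd'; omega
  -- a fixed-point-free invertible linear map on W, via GF(2^m)
  obtain ⟨e⟩ : Nonempty (W ≃ₗ[ZMod 2] GaloisField 2 m) :=
    FiniteDimensional.nonempty_linearEquiv_of_finrank_eq
      (by rw [GaloisField.finrank 2 hm0, hm])
  obtain ⟨α, hα0, hα1⟩ : ∃ α : GaloisField 2 m, α ≠ 0 ∧ α ≠ 1 := by
    by_contra h
    push_neg at h
    haveI : Finite (GaloisField 2 m) := Nat.finite_of_card_ne_zero (by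
      rw [GaloisField.card 2 m hm0]; positivity)
    haveI := Fintype.ofFinite (GaloisField 2 m)
    have hsub : (Finset.univ : Finset (GaloisField 2 m)) ⊆ {0, 1} := by
      intro x _
      rcases eq_or_ne x 0 with h0 | h0
      · simp [h0]
      · simp [h x h0]
    have h01 : ({0, 1} : Finset (GaloisField 2 m)).card ≤ 2 :=
      (Finset.card_insert_le _ _).trans (by simp)
    have hcard : Fintype.card (GaloisField 2 m) ≤ 2 :=
      (Finset.card_le_card hsub).trans h01
    have : (4 : ℕ) ≤ 2 ^ m := by
      calc (4:ℕ) = 2^2 := rfl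
      _ ≤ 2^m := Nat.pow_le_pow_right (by norm_num) hm2
    rw [← GaloisField.card 2 m hm0, Nat.card_eq_fintype_card] at this
    clear hd hd'; omega
  set σ : W →ₗ[ZMod 2] W :=
    e.symm.toLinearMap ∘ₗ (LinearMap.mulLeft (ZMod 2) α) ∘ₗ e.toLinearMap with hσ
  have hσ_apply : ∀ w : W, σ w = e.symm (α * e w) := fun w => rfl
  have hσ_ne : ∀ w : W, w ≠ 0 → σ w ≠ 0 := by
    intro w hw h0
    rw [hσ_apply] at h0
    have : α * e w = 0 := by simpa using congrArg e h0
    rcases mul_eq_zero.mp this with h | h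
    · exact hα0 h
    · exact hw (by simpa using congrArg e.symm h)
  have hσ_fix : ∀ w : W, w + σ w = 0 → w = 0 := by
    intro w hfix
    by_contra hw
    have h1 : e w + α * e w = 0 := by
      have := congrArg e hfix
      simpa [hσ_apply] using this
    have h2 : (1 + α) * e w = 0 := by rw [add_mul, one_mul]; exact h1
    have hew : e w ≠ 0 := fun h => hw (by simpa using congrArg e.symm h)
    have h3 : (1 + α) = 0 := by
      rcases mul_eq_zero.mp h2 with h | h
      · exact h
      · exact absurd h hew
    apply hα1
    have h4 : α = -1 := by linear_combination h3
    rw [h4, CharTwo.neg_eq]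
  set g : W →ₗ[ZMod 2] (Fin n → ZMod 2) × (Fin n → ZMod 2) :=
    (W.subtype).prod (W.subtype ∘ₗ σ) with hg
  have hg_apply : ∀ w : W, g w = ((w : Fin n → ZMod 2), ((σ w : W) : Fin n → ZMod 2)) :=
    fun w => rfl
  refine ⟨D.prod D ⊔ LinearMap.range g, ?_, ?_, ?_⟩
  · -- symplectic dual is contained in F
    intro z hz
    simp only [Set.mem_setOf_eq] at hz
    have h1 : z.1 ∈ D := by
      apply hdual
      intro y hy
      have := hz (0, y) (Submodule.mem_sup_left (Submodule.mem_prod.mpr ⟨D.zero_mem, hy⟩))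
      simpa using this
    have h2 : z.2 ∈ D := by
      apply hdual
      intro y hy
      have := hz (y, 0) (Submodule.mem_sup_left (Submodule.mem_prod.mpr ⟨hy, D.zero_mem⟩))
      simpa [mul_comm] using this
    exact Submodule.mem_sup_left (Submodule.mem_prod.mpr ⟨h1, h2⟩)
  · -- dimension count
    have hinj : Function.Injective g := by
      intro w w' hww
      rw [hg_apply, hg_apply] at hww
      exact Subtype.ext (congrArg Prod.fst hww)
    have hrg : Module.finrank (ZMod 2) (LinearMap.range g) = m := by
      rw [LinearMap.finrank_range_of_inj hinj, hm]
    have hprod : Module.finrank (ZMod 2) (D.prod D) =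
        Module.finrank (ZMod 2) D + Module.finrank (ZMod 2) D := by
      have eqv : ↥(D.prod D) ≃ₗ[ZMod 2] (↥D × ↥D) :=
        { toFun := fun z => (⟨z.1.1, (Submodule.mem_prod.mp z.2).1⟩,
            ⟨z.1.2, (Submodule.mem_prod.mp z.2).2⟩)
          invFun := fun p => ⟨(p.1.1, p.2.1), Submodule.mem_prod.mpr ⟨p.1.2, p.2.2⟩⟩
          left_inv := fun z => rfl
          right_inv := fun p => rfl
          map_add' := fun z w => rfl
          map_smul' := fun c z => rfl }
      rw [eqv.finrank_eq, Module.finrank_prod]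
    have hbot : D.prod D ⊓ LinearMap.range g = ⊥ := by
      rw [eq_bot_iff]
      rintro z ⟨hzp, w, hwz⟩
      rw [hg_apply] at hwz
      subst hwz
      have h1 : (w : Fin n → ZMod 2) ∈ D := (Submodule.mem_prod.mp hzp).1
      have hw0 : w = 0 := Subtype.ext (hDW _ h1 w.2)
      rw [Submodule.mem_bot, hw0]
      simp [Prod.ext_iff]
    have hkey := Submodule.finrank_sup_add_finrank_inf_eq (D.prod D) (LinearMap.range g)
    rw [hbot, hprod, hrg] at hkey
    simp only [finrank_bot, add_zero] at hkey
    rw [hkey]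
    clear hd hd'
    omega
  · -- weight bound
    intro z hzF hz0
    rw [Submodule.mem_sup] at hzF
    obtain ⟨p, hp, q, hq, rfl⟩ := hzF
    obtain ⟨w, hwq⟩ := hq
    rw [hg_apply] at hwq
    subst hwq
    have hp1 : p.1 ∈ D := (Submodule.mem_prod.mp hp).1
    have hp2 : p.2 ∈ D := (Submodule.mem_prod.mp hp).2
    rcases eq_or_ne w 0 with hw | hw
    · -- the W-component vanishes: z = p ∈ D × D
      rw [hw] at hz0 ⊢
      simp only [map_zero, ZeroMemClass.coe_zero, Prod.mk_zero_zero, add_zero] at hz0 ⊢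
      have hne : p.1 ≠ 0 ∨ p.2 ≠ 0 := by
        by_contra hcon
        push_neg at hcon
        exact hz0 (Prod.ext hcon.1 hcon.2)
      have hmain : ∀ x : Fin n → ZMod 2, x ∈ D → x ≠ 0 →
          {j | x j ≠ 0} ⊆ ({j | p.1 j ≠ 0} ∪ {j | p.2 j ≠ 0}) →
          min (2 * d) (3 * d') ≤ 2 * ({j | p.1 j ≠ 0} ∪ {j | p.2 j ≠ 0}).ncard := by
        intro x hxD hx0 hsub
        have hdle : d ≤ {j | x j ≠ 0}.ncard := hd ▸ Nat.sInf_le ⟨x, hxD, hx0, rfl⟩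
        have hle : {j | x j ≠ 0}.ncard ≤ ({j | p.1 j ≠ 0} ∪ {j | p.2 j ≠ 0}).ncard :=
          Set.ncard_le_ncard hsub (Set.toFinite _)
        calc min (2 * d) (3 * d') ≤ 2 * d := min_le_left _ _
          _ ≤ 2 * ({j | p.1 j ≠ 0} ∪ {j | p.2 j ≠ 0}).ncard :=
            Nat.mul_le_mul_left 2 (hdle.trans hle)
      rcases hne with h | h
      · exact hmain p.1 hp1 h Set.subset_union_left
      · exact hmain p.2 hp2 h Set.subset_union_right
    · -- the W-component is nonzero: use the 3d'/2 bound
      have hwv : (w : Fin n → ZMod 2) ≠ 0 := fun h => hw (Subtype.ext h)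
      have hσw : σ w ≠ 0 := hσ_ne w hw
      set a : Fin n → ZMod 2 := p.1 + (w : Fin n → ZMod 2) with ha
      set b : Fin n → ZMod 2 := p.2 + ((σ w : W) : Fin n → ZMod 2) with hb
      have haD' : a ∈ D' := D'.add_mem (hDD' hp1) (hWD' w.2)
      have hbD' : b ∈ D' := D'.add_mem (hDD' hp2) (hWD' (σ w).2)
      have habD' : a + b ∈ D' := D'.add_mem haD' hbD'
      have hane : a ≠ 0 := by
        intro h
        have hwD : (w : Fin n → ZMod 2) ∈ D := by
          rw [eq_neg_of_add_eq_zero_right h]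
          exact D.neg_mem hp1
        exact hwv (hDW _ hwD w.2)
      have hbne : b ≠ 0 := by
        intro h
        have hσD : ((σ w : W) : Fin n → ZMod 2) ∈ D := by
          rw [eq_neg_of_add_eq_zero_right h]
          exact D.neg_mem hp2
        exact hσw (Subtype.ext (hDW _ hσD (σ w).2))
      have habne : a + b ≠ 0 := by
        intro h
        have h1 : ((w + σ w : W) : Fin n → ZMod 2) ∈ D := by
          have h2 : (p.1 + p.2) + ((w + σ w : W) : Fin n → ZMod 2) = 0 := by
            rw [← h, ha, hb, Submodule.coe_add]
            abel
          rw [eq_neg_of_add_eq_zero_right h2]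
          exact D.neg_mem (D.add_mem hp1 hp2)
        have h3 : w + σ w = 0 := Subtype.ext (hDW _ h1 (w + σ w).2)
        exact hw (hσ_fix w h3)
      have hd'a : d' ≤ {j | a j ≠ 0}.ncard := hd' ▸ Nat.sInf_le ⟨a, haD', hane, rfl⟩
      have hd'b : d' ≤ {j | b j ≠ 0}.ncard := hd' ▸ Nat.sInf_le ⟨b, hbD', hbne, rfl⟩
      have hd'ab : d' ≤ {j | (a + b) j ≠ 0}.ncard :=
        hd' ▸ Nat.sInf_le ⟨a + b, habD', habne, rfl⟩
      have hkey := two_mul_ncard_union a b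
      show min (2 * d) (3 * d') ≤ 2 * ({j | a j ≠ 0} ∪ {j | b j ≠ 0}).ncard
      calc min (2 * d) (3 * d') ≤ 3 * d' := min_le_right _ _
        _ ≤ 2 * ({j | a j ≠ 0} ∪ {j | b j ≠ 0}).ncard := by
          clear hd hd'
          omega
end

section
/- Let m, n ≥ 1, let K be a finite field with 2^m elements, let Tr : K → 𝔽₂ be the trace of K over 𝔽₂, and let α₁, …, α_m be a self-dual 𝔽₂-basis of K (Tr(αᵢ αⱼ) = δᵢⱼ). Let β : Kⁿ → 𝔽₂^{n·m} be the 𝔽₂-linear symbolwise expansion map sending x = (x₁,…,xₙ) to the array (xᵢ^{(j)})_{j∈[n], i∈[m]} of coordinates xⱼ = Σᵢ xᵢ^{(j)} αᵢ. Let C ⊆ Kⁿ be a K-linear code and let C^⊥ = {x ∈ Kⁿ : Σⱼ xⱼ yⱼ = 0 for all y ∈ C} be its dual. Then the 𝔽₂-dual of β(C) with respect to the standard dot product on 𝔽₂^{n·m} equals β(C^⊥); in particular, if C^⊥ ⊆ C then β(C)^⊥ = β(C^⊥) ⊆ β(C). -/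
/-!
Expanding each coordinate in a self-dual basis turns the trace form `Tr(ab)` into the standard
dot product of coordinate vectors, so `β x ⬝ᵥ β y = Tr(x ⬝ᵥ y)`. As `β` is bijective, `β(C)^⊥`
is the image of `{x | Tr(x ⬝ᵥ y) = 0 for all y ∈ C}`, and because `C` is closed under scaling
by `K` while the trace form is nondegenerate, this set is exactly `C^⊥`.
-/

open Matrix

namespace Module.Basis

variable {ι κ R A : Type*} [Fintype κ] [DecidableEq κ] [CommRing R] [CommRing A] [Algebra R A]

def IsSelfDual (α : Basis κ R A) : Prop :=
  ∀ i j, Algebra.trace R A (α i * α j) = if i = j then 1 else 0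

theorem IsSelfDual.trace_mul {α : Basis κ R A} (hα : α.IsSelfDual) (a b : A) :
    Algebra.trace R A (a * b) = α.repr a ⬝ᵥ α.repr b := by
  conv_lhs => rw [← α.sum_repr a, ← α.sum_repr b]
  simp only [Finset.sum_mul_sum, map_sum, smul_mul_smul_comm, map_smul, hα _ _, smul_eq_mul,
    mul_ite, mul_one, mul_zero, Finset.sum_ite_eq, Finset.mem_univ, if_true, dotProduct]

theorem IsSelfDual.eq_zero_of_forall_trace_mul {α : Basis κ R A} (hα : α.IsSelfDual) {a : A}
    (h : ∀ c, Algebra.trace R A (c * a) = 0) : a = 0 := by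
  refine α.repr.map_eq_zero_iff.mp (Finsupp.ext fun i => ?_)
  simpa [hα.trace_mul, α.repr_self, Finsupp.single_apply, dotProduct] using h (α i)

noncomputable def symbolExpansion (α : Basis κ R A) : (ι → A) ≃ₗ[R] (ι × κ → R) :=
  (LinearEquiv.piCongrRight fun _ => α.equivFun).trans (LinearEquiv.curry R R ι κ).symm

omit [DecidableEq κ] in
@[simp]
theorem symbolExpansion_apply (α : Basis κ R A) (x : ι → A) (p : ι × κ) :
    α.symbolExpansion x p = α.repr (x p.1) p.2 :=
  rfl

theorem IsSelfDual.symbolExpansion_dotProduct [Fintype ι] {α : Basis κ R A} (hα : α.IsSelfDual)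
    (x y : ι → A) :
    α.symbolExpansion x ⬝ᵥ α.symbolExpansion y = Algebra.trace R A (x ⬝ᵥ y) := by
  simp only [dotProduct, Fintype.sum_prod_type, symbolExpansion_apply, map_sum, hα.trace_mul]

theorem IsSelfDual.forall_trace_dotProduct_eq_zero_iff [Fintype ι] {α : Basis κ R A}
    (hα : α.IsSelfDual) (C : Submodule A (ι → A)) (x : ι → A) :
    (∀ y ∈ C, Algebra.trace R A (x ⬝ᵥ y) = 0) ↔ ∀ y ∈ C, x ⬝ᵥ y = 0 := by
  refine ⟨fun h y hy => hα.eq_zero_of_forall_trace_mul fun c => ?_, fun h y hy => by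
    rw [h y hy, map_zero]⟩
  simpa [dotProduct_smul] using h (c • y) (C.smul_mem c hy)

end Module.Basis

theorem kasami_lin_general
    (m n : ℕ)
    (K : Type*) [Field K] [Algebra (ZMod 2) K]
    (α : Module.Basis (Fin m) (ZMod 2) K)
    (hsd : ∀ i j, Algebra.trace (ZMod 2) K (α i * α j) =
      if i = j then 1 else 0)
    (β : (Fin n → K) → (Fin n × Fin m → ZMod 2))
    (hβ : ∀ x p, β x p = α.repr (x p.1) p.2)
    (C : Submodule K (Fin n → K)) :
    {z : Fin n × Fin m → ZMod 2 |
        ∀ y ∈ β '' (C : Set (Fin n → K)), ∑ p, z p * y p = 0}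
      = β '' {x | ∀ y ∈ C, ∑ j, x j * y j = 0} ∧
    ((∀ x : Fin n → K, (∀ y ∈ C, ∑ j, x j * y j = 0) → x ∈ C) →
      β '' {x | ∀ y ∈ C, ∑ j, x j * y j = 0} ⊆ β '' (C : Set (Fin n → K))) := by
  replace hsd : α.IsSelfDual := hsd
  obtain rfl : β = α.symbolExpansion := funext fun x => funext (hβ x)
  refine ⟨?_, Set.image_mono⟩
  ext z
  obtain ⟨x, rfl⟩ := α.symbolExpansion.surjective z
  simp only [Set.mem_ofPred_eq, Set.forall_mem_image, α.symbolExpansion.injective.mem_set_image,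
    ← dotProduct.eq_1, hsd.symbolExpansion_dotProduct]
  exact hsd.forall_trace_dotProduct_eq_zero_iff C x

/-- Kasami–Lin theorem: the binary dual of the symbolwise binary expansion
`β(C)` of a `K`-linear code `C` in a self-dual basis equals `β(C^⊥)`;
in particular, if `C^⊥ ⊆ C` then `β(C)^⊥ = β(C^⊥) ⊆ β(C)`. -/
theorem kasami_lin
    (m n : ℕ) (hm : 1 ≤ m) (hn : 1 ≤ n)
    (K : Type*) [Field K] [Fintype K] [Algebra (ZMod 2) K]
    (hcard : Fintype.card K = 2 ^ m)
    (α : Module.Basis (Fin m) (ZMod 2) K)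
    (hsd : ∀ i j, Algebra.trace (ZMod 2) K (α i * α j) =
      if i = j then 1 else 0)
    (β : (Fin n → K) → (Fin n × Fin m → ZMod 2))
    (hβ : ∀ x p, β x p = α.repr (x p.1) p.2)
    (C : Submodule K (Fin n → K)) :
    {z : Fin n × Fin m → ZMod 2 |
        ∀ y ∈ β '' (C : Set (Fin n → K)), ∑ p, z p * y p = 0}
      = β '' {x | ∀ y ∈ C, ∑ j, x j * y j = 0} ∧
    ((∀ x : Fin n → K, (∀ y ∈ C, ∑ j, x j * y j = 0) → x ∈ C) →
      β '' {x | ∀ y ∈ C, ∑ j, x j * y j = 0} ⊆ β '' (C : Set (Fin n → K))) :=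
  kasami_lin_general m n K α hsd β hβ C
end

section
/- Let n ≥ 1 and 1 ≤ k ≤ n. Define σ : 𝔽₂ × 𝔽₂ → Matrix (Fin 2) (Fin 2) ℂ by σ(0,0) = identity, σ(0,1) = [[0,1],[1,0]], σ(1,0) = [[1,0],[0,−1]], σ(1,1) = [[0,−i],[i,0]], and for v ∈ (𝔽₂ × 𝔽₂)ⁿ define M(v) ∈ Matrix (Fin n → Fin 2) (Fin n → Fin 2) ℂ by M(v)(s,t) = Πₖ σ(vₖ)(sₖ, tₖ). Let f₁, …, f_k ∈ (𝔽₂ × 𝔽₂)ⁿ be linearly independent over 𝔽₂ and pairwise isotropic: ω(fᵢ, fⱼ) := Σₗ ((fᵢ)ₗ₁(fⱼ)ₗ₂ + (fⱼ)ₗ₁(fᵢ)ₗ₂) = 0 for all i, j. Let μ₁, …, μ_k ∈ {1, −1} ⊆ ℂ. Then the stabilizer code Q = {x : (Fin n → Fin 2) → ℂ | M(fᵢ).mulVec x = μᵢ • x for all i = 1, …, k} is a ℂ-linear subspace of dimension exactly 2^{n−k}. -/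
/-- The Pauli matrices `I, X, Z, Y` indexed by `𝔽₂ × 𝔽₂`
(equivalently by `𝔽₄` via `(0,0)=0, (0,1)=ε, (1,0)=ε̄, (1,1)=1`). -/
noncomputable def pauli (a : ZMod 2 × ZMod 2) : Matrix (Fin 2) (Fin 2) ℂ :=
  if a = (0, 0) then 1
  else if a = (0, 1) then !![0, 1; 1, 0]
  else if a = (1, 0) then !![1, 0; 0, -1]
  else !![0, -Complex.I; Complex.I, 0]

/-- The `n`-fold Kronecker product of Pauli matrices,
`M(v)(s,t) = Πₖ σ(vₖ)(sₖ,tₖ)`. -/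
noncomputable def pauliTensor {n : ℕ} (v : Fin n → ZMod 2 × ZMod 2) :
    Matrix (Fin n → Fin 2) (Fin n → Fin 2) ℂ :=
  Matrix.of fun s t => ∏ k, pauli (v k) (s k) (t k)

/-!
The generators square to `1` and, by isotropy, pairwise commute, so
`P = ∏ᵢ (1 + μᵢ M(fᵢ)) / 2` is an idempotent whose range is the joint eigenspace `Q`; hence
`dim Q = tr P`. Multiplying in one factor at a time, `tr (M(w) P)` vanishes whenever `w` lies
outside the span of the `fᵢ` used so far, because a product of Pauli tensors is a multiple of the
Pauli tensor of the sum and only `M(0) = 1` has nonzero trace. By linear independence each new factor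
`(1 + μᵢ M(fᵢ)) / 2` therefore just halves the trace, so `tr P = 2⁻ᵏ tr 1 = 2^(n-k)`.
-/

open Matrix

namespace Matrix

variable {R ι : Type*} [CommSemiring R] [Fintype ι] {l m n : ι → Type*}

def piKronecker (A : ∀ i, Matrix (m i) (n i) R) : Matrix (∀ i, m i) (∀ i, n i) R :=
  of fun s t => ∏ i, A i (s i) (t i)

@[simp]
lemma piKronecker_apply (A : ∀ i, Matrix (m i) (n i) R) (s : ∀ i, m i) (t : ∀ i, n i) :
    piKronecker A s t = ∏ i, A i (s i) (t i) := rfl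

lemma piKronecker_mul [DecidableEq ι] [∀ i, Fintype (m i)] (A : ∀ i, Matrix (l i) (m i) R)
    (B : ∀ i, Matrix (m i) (n i) R) :
    piKronecker A * piKronecker B = piKronecker fun i => A i * B i := by
  ext s t
  simp only [mul_apply, piKronecker_apply, Finset.prod_univ_sum, Fintype.piFinset_univ,
    Finset.prod_mul_distrib]

lemma piKronecker_one [DecidableEq ι] [∀ i, DecidableEq (m i)] :
    piKronecker (fun i => (1 : Matrix (m i) (m i) R)) = 1 := by
  ext s t
  simp only [piKronecker_apply, one_apply, Finset.prod_boole, funext_iff, Finset.mem_univ,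
    true_implies]

lemma piKronecker_smul (c : ι → R) (A : ∀ i, Matrix (m i) (n i) R) :
    piKronecker (fun i => c i • A i) = (∏ i, c i) • piKronecker A := by
  ext s t
  simp only [piKronecker_apply, smul_apply, smul_eq_mul, Finset.prod_mul_distrib]

lemma trace_piKronecker [DecidableEq ι] [∀ i, Fintype (m i)] (A : ∀ i, Matrix (m i) (m i) R) :
    (piKronecker A).trace = ∏ i, (A i).trace := by
  simp only [trace, diag, piKronecker_apply, Finset.prod_univ_sum, Fintype.piFinset_univ]

end Matrix

lemma pauli_mul_self (a : ZMod 2 × ZMod 2) : pauli a * pauli a = 1 := by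
  rcases a with ⟨x, y⟩
  fin_cases x <;> fin_cases y <;> simp +decide [pauli, one_fin_two]

lemma exists_pauli_mul_eq_smul (a b : ZMod 2 × ZMod 2) :
    ∃ c : ℂ, pauli a * pauli b = c • pauli (a + b) := by
  rcases a with ⟨x, y⟩; rcases b with ⟨z, w⟩
  fin_cases x <;> fin_cases y <;> fin_cases z <;> fin_cases w <;>
    simp +decide [pauli, one_fin_two]
  exacts [⟨-Complex.I, by simp⟩, ⟨Complex.I, by simp⟩]

lemma pauli_mul_comm (a b : ZMod 2 × ZMod 2) :
    pauli a * pauli b = (-1 : ℂ) ^ (a.1 * b.2 + b.1 * a.2).val • (pauli b * pauli a) := by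
  rcases a with ⟨x, y⟩; rcases b with ⟨z, w⟩
  fin_cases x <;> fin_cases y <;> fin_cases z <;> fin_cases w <;>
    simp +decide [pauli, one_fin_two]

lemma trace_pauli (a : ZMod 2 × ZMod 2) : (pauli a).trace = if a = 0 then 2 else 0 := by
  rcases a with ⟨x, y⟩
  fin_cases x <;> fin_cases y <;> norm_num +decide [pauli, one_fin_two, trace_fin_two]

lemma prod_neg_one_pow_val {ι : Type*} (s : Finset ι) (g : ι → ZMod 2) :
    ∏ i ∈ s, (-1 : ℂ) ^ (g i).val = (-1) ^ (∑ i ∈ s, g i).val := by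
  classical
  induction s using Finset.induction_on with
  | empty => simp
  | insert a s ha ih =>
    rw [Finset.prod_insert ha, Finset.sum_insert ha, ih, ← pow_add, ZMod.val_add,
      ← neg_one_pow_eq_pow_mod_two]

section PauliTensor

variable {n : ℕ}

lemma pauliTensor_eq_piKronecker (v : Fin n → ZMod 2 × ZMod 2) :
    pauliTensor v = piKronecker fun k => pauli (v k) := rfl

lemma pauliTensor_mul_self (v : Fin n → ZMod 2 × ZMod 2) :
    pauliTensor v * pauliTensor v = 1 := by
  simp only [pauliTensor_eq_piKronecker, piKronecker_mul, pauli_mul_self, piKronecker_one]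

lemma exists_pauliTensor_mul_eq_smul (v w : Fin n → ZMod 2 × ZMod 2) :
    ∃ c : ℂ, pauliTensor v * pauliTensor w = c • pauliTensor (v + w) := by
  choose c hc using fun k => exists_pauli_mul_eq_smul (v k) (w k)
  refine ⟨∏ k, c k, ?_⟩
  simp only [pauliTensor_eq_piKronecker, piKronecker_mul, hc, piKronecker_smul, Pi.add_apply]

lemma commute_pauliTensor {v w : Fin n → ZMod 2 × ZMod 2}
    (h : ∑ l, ((v l).1 * (w l).2 + (w l).1 * (v l).2) = 0) :
    Commute (pauliTensor v) (pauliTensor w) := by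
  change piKronecker _ * piKronecker _ = piKronecker _ * piKronecker _
  rw [piKronecker_mul, piKronecker_mul]
  simp_rw [pauli_mul_comm (v _)]
  rw [piKronecker_smul, prod_neg_one_pow_val, h, ZMod.val_zero, pow_zero, one_smul]

lemma trace_pauliTensor_of_ne_zero {v : Fin n → ZMod 2 × ZMod 2} (hv : v ≠ 0) :
    (pauliTensor v).trace = 0 := by
  obtain ⟨k, hk⟩ := Function.ne_iff.mp hv
  rw [pauliTensor_eq_piKronecker, trace_piKronecker]
  exact Finset.prod_eq_zero (Finset.mem_univ k) (by simpa [trace_pauli] using hk)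

end PauliTensor

section EigenProjector

variable {A : Type*} [Ring A] [Algebra ℂ A]

noncomputable def eigenProjector (μ : ℂ) (M : A) : A := (2 : ℂ)⁻¹ • (1 + μ • M)

variable {μ ν : ℂ} {M N : A}

lemma mul_eigenProjector (hM : M * M = 1) (hμ : μ * μ = 1) :
    M * eigenProjector μ M = μ • eigenProjector μ M := by
  rw [eigenProjector, mul_smul_comm, smul_comm μ]
  congr 1
  rw [mul_add, mul_one, mul_smul_comm, hM, smul_add, smul_smul, hμ, one_smul, add_comm]

lemma isIdempotentElem_eigenProjector (hM : M * M = 1) (hμ : μ * μ = 1) :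
    IsIdempotentElem (eigenProjector μ M) := by
  have h := mul_eigenProjector hM hμ
  rw [IsIdempotentElem]
  nth_rw 1 [eigenProjector]
  rw [smul_mul_assoc, add_mul, one_mul, smul_mul_assoc, h,
    smul_smul, hμ, one_smul, ← two_smul ℂ, smul_smul, inv_mul_cancel₀ two_ne_zero, one_smul]

lemma Commute.eigenProjector_right (h : Commute M N) : Commute M (eigenProjector ν N) :=
  ((Commute.one_right M).add_right (h.smul_right ν)).smul_right _

lemma Commute.eigenProjector_left (h : Commute M N) : Commute (eigenProjector μ M) N :=
  (h.symm.eigenProjector_right).symm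

end EigenProjector

section JointEigenProjector

variable {A ι : Type*} [Ring A] [Algebra ℂ A]

noncomputable def jointEigenProjector (M : ι → A) (μ : ι → ℂ) (l : List ι) : A :=
  (l.map fun i => eigenProjector (μ i) (M i)).prod

variable {M : ι → A} {μ : ι → ℂ}

@[simp]
lemma jointEigenProjector_nil : jointEigenProjector M μ [] = 1 := rfl

@[simp]
lemma jointEigenProjector_cons (i : ι) (l : List ι) :
    jointEigenProjector M μ (i :: l) = eigenProjector (μ i) (M i) * jointEigenProjector M μ l :=
  List.prod_cons

lemma Commute.jointEigenProjector_right {N : A} {l : List ι} (h : ∀ i ∈ l, Commute N (M i)) :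
    Commute N (jointEigenProjector M μ l) :=
  Commute.list_prod_right _ _ <| by
    simpa using fun i hi => (h i hi).eigenProjector_right

lemma isIdempotentElem_jointEigenProjector (hcomm : ∀ i j, Commute (M i) (M j))
    (hM : ∀ i, M i * M i = 1) (hμ : ∀ i, μ i * μ i = 1) (l : List ι) :
    IsIdempotentElem (jointEigenProjector M μ l) := by
  induction l with
  | nil => exact IsIdempotentElem.one
  | cons i l ih =>
    rw [jointEigenProjector_cons]
    exact IsIdempotentElem.mul_of_commute
      (Commute.jointEigenProjector_right fun j _ => (hcomm i j).eigenProjector_left)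
      (isIdempotentElem_eigenProjector (hM i) (hμ i)) ih

lemma mul_jointEigenProjector_of_mem {i : ι} (hcomm : ∀ j, Commute (M i) (M j))
    (hM : M i * M i = 1) (hμ : μ i * μ i = 1) {l : List ι} (hi : i ∈ l) :
    M i * jointEigenProjector M μ l = μ i • jointEigenProjector M μ l := by
  induction l with
  | nil => simp at hi
  | cons j l ih =>
    rw [jointEigenProjector_cons, ← mul_assoc]
    rcases List.mem_cons.mp hi with rfl | hil
    · rw [mul_eigenProjector hM hμ, smul_mul_assoc]
    · rw [((hcomm j).eigenProjector_right).eq, mul_assoc, ih hil, mul_smul_comm]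

end JointEigenProjector

section JointEigenspace

variable {m ι : Type*} [Fintype m] [DecidableEq m]

lemma eigenProjector_mulVec {M : Matrix m m ℂ} {μ : ℂ} {x : m → ℂ} (hx : M *ᵥ x = μ • x)
    (hμ : μ * μ = 1) : eigenProjector μ M *ᵥ x = x := by
  rw [eigenProjector, smul_mulVec, add_mulVec, one_mulVec, smul_mulVec, hx, smul_smul, hμ,
    one_smul, ← two_smul ℂ x, smul_smul, inv_mul_cancel₀ two_ne_zero, one_smul]

variable {M : ι → Matrix m m ℂ} {μ : ι → ℂ}

lemma jointEigenProjector_mulVec {x : m → ℂ} {l : List ι} (hx : ∀ i ∈ l, M i *ᵥ x = μ i • x)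
    (hμ : ∀ i ∈ l, μ i * μ i = 1) : jointEigenProjector M μ l *ᵥ x = x := by
  induction l with
  | nil => exact one_mulVec x
  | cons i l ih =>
    simp only [List.mem_cons, forall_eq_or_imp] at hx hμ
    rw [jointEigenProjector_cons, ← mulVec_mulVec, ih hx.2 hμ.2, eigenProjector_mulVec hx.1 hμ.1]

lemma mem_range_toLin'_jointEigenProjector (hcomm : ∀ i j, Commute (M i) (M j))
    (hM : ∀ i, M i * M i = 1) (hμ : ∀ i, μ i * μ i = 1) (l : List ι) (x : m → ℂ) :
    x ∈ LinearMap.range (jointEigenProjector M μ l).toLin' ↔ ∀ i ∈ l, M i *ᵥ x = μ i • x := by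
  refine ⟨?_, fun hx => ⟨x, jointEigenProjector_mulVec hx fun i _ => hμ i⟩⟩
  rintro ⟨y, rfl⟩ i hi
  rw [toLin'_apply, mulVec_mulVec, mul_jointEigenProjector_of_mem (hcomm i) (hM i) (hμ i) hi,
    smul_mulVec]

end JointEigenspace

lemma IsIdempotentElem.trace_eq_finrank_range_toLin' {K m : Type*} [Field K] [Fintype m]
    [DecidableEq m] {P : Matrix m m K} (hP : IsIdempotentElem P) :
    P.trace = Module.finrank K (LinearMap.range P.toLin') := by
  have hP' : IsIdempotentElem P.toLin' := hP.map toLinAlgEquiv'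
  rw [← trace_toLin'_eq, (LinearMap.isProj_range_iff_isIdempotentElem _).mpr hP' |>.trace]

section StabilizerTrace

variable {n : ℕ} {ι : Type*} (f : ι → Fin n → ZMod 2 × ZMod 2) (μ : ι → ℂ)

lemma trace_pauliTensor_mul_jointEigenProjector (l : List ι) {w : Fin n → ZMod 2 × ZMod 2}
    (hw : w ∉ Submodule.span (ZMod 2) (f '' {i | i ∈ l})) :
    (pauliTensor w * jointEigenProjector (fun i => pauliTensor (f i)) μ l).trace = 0 := by
  induction l generalizing w with
  | nil =>
    rw [jointEigenProjector_nil, mul_one]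
    exact trace_pauliTensor_of_ne_zero fun h => hw (h ▸ Submodule.zero_mem _)
  | cons i l ih =>
    have hspan : Submodule.span (ZMod 2) (f '' {j | j ∈ l}) ≤
        Submodule.span (ZMod 2) (f '' {j | j ∈ i :: l}) :=
      Submodule.span_mono (Set.image_mono fun j hj => List.mem_cons_of_mem i hj)
    have hfi : f i ∈ Submodule.span (ZMod 2) (f '' {j | j ∈ i :: l}) :=
      Submodule.subset_span ⟨i, List.mem_cons_self, rfl⟩
    have hw' : w + f i ∉ Submodule.span (ZMod 2) (f '' {j | j ∈ l}) := fun h =>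
      hw (by simpa using Submodule.sub_mem _ (hspan h) hfi)
    obtain ⟨c, hc⟩ := exists_pauliTensor_mul_eq_smul w (f i)
    rw [jointEigenProjector_cons, ← mul_assoc, eigenProjector, mul_smul_comm, mul_add, mul_one,
      mul_smul_comm, hc]
    simp only [smul_mul_assoc, add_mul, trace_smul, trace_add, ih fun h => hw (hspan h), ih hw',
      smul_zero, add_zero]

lemma two_pow_length_mul_trace_jointEigenProjector (hf : LinearIndependent (ZMod 2) f)
    {l : List ι} (hl : l.Nodup) :
    2 ^ l.length * (jointEigenProjector (fun i => pauliTensor (f i)) μ l).trace = 2 ^ n := by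
  induction l with
  | nil => simp [trace_one]
  | cons i l ih =>
    obtain ⟨hil, hl⟩ := List.nodup_cons.mp hl
    have hzero := trace_pauliTensor_mul_jointEigenProjector f μ l
      (hf.notMem_span_image (s := {j | j ∈ l}) hil)
    rw [jointEigenProjector_cons, eigenProjector, smul_mul_assoc, add_mul, one_mul,
      smul_mul_assoc, trace_smul, trace_add, trace_smul, hzero, List.length_cons, ← ih hl]
    simp only [smul_eq_mul, mul_zero, add_zero, pow_succ]
    field_simp

end StabilizerTrace

theorem stabilizer_code_dimension_general
    (n k : ℕ) (hkn : k ≤ n)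
    (f : Fin k → (Fin n → ZMod 2 × ZMod 2))
    (hind : LinearIndependent (ZMod 2) f)
    (hiso : ∀ i j, ∑ l, ((f i l).1 * (f j l).2 + (f j l).1 * (f i l).2)
      = (0 : ZMod 2))
    (μ : Fin k → ℂ) (hμ : ∀ i, μ i = 1 ∨ μ i = -1) :
    ∃ Q : Submodule ℂ ((Fin n → Fin 2) → ℂ),
      (Q : Set ((Fin n → Fin 2) → ℂ)) =
        {x | ∀ i, (pauliTensor (f i)).mulVec x = μ i • x} ∧
      Module.finrank ℂ Q = 2 ^ (n - k) := by
  have hcomm i j : Commute (pauliTensor (f i)) (pauliTensor (f j)) := commute_pauliTensor (hiso i j)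
  have hM i : pauliTensor (f i) * pauliTensor (f i) = 1 := pauliTensor_mul_self (f i)
  have hμ' i : μ i * μ i = 1 := by rcases hμ i with h | h <;> simp [h]
  set P := jointEigenProjector (fun i => pauliTensor (f i)) μ (List.finRange k)
  refine ⟨LinearMap.range P.toLin', ?_, ?_⟩
  · ext x
    rw [SetLike.mem_coe, mem_range_toLin'_jointEigenProjector hcomm hM hμ']
    simp
  · have htrace := two_pow_length_mul_trace_jointEigenProjector f μ hind (List.nodup_finRange k)
    have hsplit : (2 : ℂ) ^ n = 2 ^ (n - k) * 2 ^ k := by rw [← pow_add, Nat.sub_add_cancel hkn]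
    rw [(isIdempotentElem_jointEigenProjector hcomm hM hμ' _).trace_eq_finrank_range_toLin',
      List.length_finRange, hsplit, mul_comm] at htrace
    exact_mod_cast mul_right_cancel₀ (pow_ne_zero _ two_ne_zero) htrace

/-- Dimension of a quantum stabilizer code: for `k` linearly independent,
pairwise isotropic generators `f₁,…,f_k` and signs `μᵢ = ±1`, the joint
eigenspace `Q = {x | M(fᵢ)x = μᵢ x}` is a `ℂ`-subspace of dimension
exactly `2^(n-k)`. -/
theorem stabilizer_code_dimension
    (n k : ℕ) (hk : 1 ≤ k) (hkn : k ≤ n)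
    (f : Fin k → (Fin n → ZMod 2 × ZMod 2))
    (hind : LinearIndependent (ZMod 2) f)
    (hiso : ∀ i j, ∑ l, ((f i l).1 * (f j l).2 + (f j l).1 * (f i l).2)
      = (0 : ZMod 2))
    (μ : Fin k → ℂ) (hμ : ∀ i, μ i = 1 ∨ μ i = -1) :
    ∃ Q : Submodule ℂ ((Fin n → Fin 2) → ℂ),
      (Q : Set ((Fin n → Fin 2) → ℂ)) =
        {x | ∀ i, (pauliTensor (f i)).mulVec x = μ i • x} ∧
      Module.finrank ℂ Q = 2 ^ (n - k) :=
  stabilizer_code_dimension_general n k hkn f hind hiso μ hμ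
end

section
/- Let K be a finite field of characteristic 2, let n ≥ 1, let w : Fin n → K with wᵢ ≠ 0 for all i, and let v : Fin n → K satisfy vᵢ² = wᵢ for all i. Let C ⊆ Kⁿ be a K-linear code such that C_w^⊥ := {x ∈ Kⁿ : Σᵢ wᵢ xᵢ yᵢ = 0 for all y ∈ C} ⊆ C. Let C' = {(v₁x₁, …, vₙxₙ) : x ∈ C} be the image of C under coordinatewise multiplication by v. Then C' contains its dual with respect to the standard bilinear form: C'^⊥ := {x : Σᵢ xᵢ yᵢ = 0 for all y ∈ C'} ⊆ C'. -/
/-- Twisting argument: if a code `C` over a finite field of characteristic 2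
contains its `w`-twisted dual and `vᵢ² = wᵢ`, then the coordinatewise
rescaling `C' = v·C` contains its ordinary dual. -/
theorem twisted_dual_to_selfdual
    (K : Type*) [Field K] [Fintype K] [CharP K 2]
    (n : ℕ) (hn : 1 ≤ n) (w v : Fin n → K)
    (hw : ∀ i, w i ≠ 0) (hv : ∀ i, v i ^ 2 = w i)
    (C : Submodule K (Fin n → K))
    (hC : ∀ x : Fin n → K, (∀ y ∈ C, ∑ i, w i * x i * y i = 0) → x ∈ C)
    (C' : Set (Fin n → K))
    (hC' : C' = (fun x => fun i => v i * x i) '' (C : Set (Fin n → K))) :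
    ∀ x : Fin n → K, (∀ y ∈ C', ∑ i, x i * y i = 0) → x ∈ C' := by
  intro x hx
  have hvne : ∀ i, v i ≠ 0 := by
    intro i h
    exact hw i (by rw [← hv i, h]; ring)
  set c : Fin n → K := fun i => x i / v i with hc
  have hcC : c ∈ C := by
    apply hC
    intro y hy
    have hvy : (fun i => v i * y i) ∈ C' := by
      rw [hC']; exact ⟨y, hy, rfl⟩
    have := hx _ hvy
    rw [← this]
    apply Finset.sum_congr rfl
    intro i _
    rw [← hv i]
    simp only [hc]
    field_simp [hvne i]
  rw [hC']
  refine ⟨c, hcC, ?_⟩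
  funext i
  simp only [hc]
  rw [mul_div_cancel₀ _ (hvne i)]
end

section
/- Let m, n ≥ 1, let K be a finite field with 2^{2m} elements admitting a self-dual 𝔽₂-basis, and let C ⊆ C' ⊆ Kⁿ be K-linear codes with C^⊥ ⊆ C (dual with respect to Σᵢ xᵢyᵢ) and dim_K C' ≥ dim_K C + 1. Let d be the minimum Hamming weight of a nonzero codeword of C and d' that of C'. Set N = 2mn. Then there exists an 𝔽₂-subspace F ⊆ 𝔽₂^N × 𝔽₂^N such that: (i) F^ω ⊆ F, where F^ω is the dual of F with respect to the symplectic form ω((x,y),(x',y')) = Σⱼ (xⱼ y'ⱼ + x'ⱼ yⱼ); (ii) dim_{𝔽₂} F = 2m·(dim_K C + dim_K C'); and (iii) every nonzero (x,y) ∈ F satisfies 2·|supp(x) ∪ supp(y)| ≥ min(2d, 3d'). -/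
/-!
Expanding every coordinate in a self-dual basis is an `𝔽₂`-linear bijection `Kⁿ ≃ 𝔽₂^N` that
carries the binary dot product to the trace of the dot product over `K`; as the trace form is
nondegenerate, the binary dual of the expansion of `C` is the expansion of `C^⊥ ⊆ C`.

Fix `μ ∈ K` outside `𝔽₂` and let `F` be the expansion of `S = {(a, b) : a ∈ C', b - μ a ∈ C}`,
the image of `C' × C` under `(a, c) ↦ (a, μ a + c)`. As `S ⊇ C × C`, its symplectic dual lies in
`C^⊥ × C^⊥ ⊆ C × C ⊆ S`. For binary `x, y` one has `2 |supp x ∪ supp y| = |x| + |y| + |x + y|`,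
and expansion does not decrease weights. For `(a, b) ∈ S` either `a ∈ C`, and then `a, b, a + b`
lie in `C` with at least two of them nonzero, or `a, b, a + b` all lie in `C' \ C`, being
congruent to `a, μ a, (1 + μ) a` modulo `C`.
-/

open Module

section SelfDualBasis

variable {F L ι : Type*} [Field F] [CommRing L] [Algebra F L] [Fintype ι] [DecidableEq ι]

def IsSelfDualBasis (α : Basis ι F L) : Prop :=
  ∀ i j, Algebra.trace F L (α i * α j) = if i = j then 1 else 0

variable {α : Basis ι F L}

theorem IsSelfDualBasis.trace_mul_eq_repr (hα : IsSelfDualBasis α) (t : L) (i : ι) :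
    Algebra.trace F L (t * α i) = α.repr t i := by
  calc Algebra.trace F L (t * α i)
      = ∑ j, α.repr t j * Algebra.trace F L (α j * α i) := by
        conv_lhs => rw [← α.sum_repr t]
        simp only [Finset.sum_mul, map_sum, smul_mul_assoc, map_smul, smul_eq_mul]
    _ = α.repr t i := by simp [fun j => hα j i]

theorem IsSelfDualBasis.sum_repr_mul_repr (hα : IsSelfDualBasis α) (a b : L) :
    ∑ i, α.repr a i * α.repr b i = Algebra.trace F L (a * b) := by
  calc ∑ i, α.repr a i * α.repr b i
      = ∑ i, α.repr a i * Algebra.trace F L (b * α i) := by simp only [hα.trace_mul_eq_repr]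
    _ = Algebra.trace F L (b * ∑ i, α.repr a i • α i) := by
        simp only [Finset.mul_sum, mul_smul_comm, map_sum, map_smul, smul_eq_mul]
    _ = Algebra.trace F L (a * b) := by rw [α.sum_repr, mul_comm]

theorem IsSelfDualBasis.eq_zero_of_forall_trace_mul_eq_zero (hα : IsSelfDualBasis α) {s : L}
    (hs : ∀ t, Algebra.trace F L (s * t) = 0) : s = 0 := by
  refine α.repr.injective (Finsupp.ext fun i => ?_)
  simpa [hα.trace_mul_eq_repr] using hs (α i)

theorem IsSelfDualBasis.dotProduct_eq_zero_of_forall_trace_eq_zero {ι' : Type*} [Fintype ι']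
    (hα : IsSelfDualBasis α) {C : Submodule L (ι' → L)} {x : ι' → L}
    (hx : ∀ y ∈ C, Algebra.trace F L (x ⬝ᵥ y) = 0) {y : ι' → L} (hy : y ∈ C) : x ⬝ᵥ y = 0 :=
  hα.eq_zero_of_forall_trace_mul_eq_zero fun t => by
    simpa [dotProduct_smul, smul_eq_mul, mul_comm t] using hx (t • y) (C.smul_mem t hy)

end SelfDualBasis

section BasisExpansion

variable {F L : Type*} [Field F] [CommRing L] [Algebra F L] {k : ℕ}

noncomputable def basisExpansion (α : Basis (Fin k) F L) (n : ℕ) :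
    (Fin n → L) ≃ₗ[F] (Fin (k * n) → F) :=
  LinearEquiv.piCongrRight (fun _ => α.equivFun) ≪≫ₗ
    (LinearEquiv.curry F F (Fin n) (Fin k)).symm ≪≫ₗ
    LinearEquiv.funCongrLeft F F (finProdFinEquiv.symm.trans (Equiv.prodComm (Fin k) (Fin n)))

variable {α : Basis (Fin k) F L} {n : ℕ}

@[simp]
theorem basisExpansion_apply_finProdFinEquiv (c : Fin n → L) (j : Fin k) (i : Fin n) :
    basisExpansion α n c (finProdFinEquiv (j, i)) = α.repr (c i) j := by
  simp [basisExpansion]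

theorem ncard_support_le_ncard_support_basisExpansion (c : Fin n → L) :
    {i | c i ≠ 0}.ncard ≤ {p | basisExpansion α n c p ≠ 0}.ncard := by
  suffices {i | c i ≠ 0} =
      (fun p => (finProdFinEquiv.symm p).2) '' {p | basisExpansion α n c p ≠ 0} by
    rw [this]; exact Set.ncard_image_le
  ext i
  constructor
  · intro hi
    obtain ⟨j, hj⟩ : ∃ j, α.repr (c i) j ≠ 0 := by
      by_contra! h
      exact hi (α.repr.map_eq_zero_iff.mp (Finsupp.ext h))
    exact ⟨finProdFinEquiv (j, i), by simpa using hj, by simp⟩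
  · rintro ⟨p, hp, rfl⟩ hc
    obtain ⟨⟨j, i⟩, rfl⟩ := finProdFinEquiv.surjective p
    simp_all

theorem IsSelfDualBasis.basisExpansion_dotProduct (hα : IsSelfDualBasis α) (a b : Fin n → L) :
    basisExpansion α n a ⬝ᵥ basisExpansion α n b = Algebra.trace F L (a ⬝ᵥ b) := by
  rw [dotProduct, ← finProdFinEquiv.sum_comp, Fintype.sum_prod_type_right, dotProduct, map_sum]
  simp [hα.sum_repr_mul_repr]

theorem IsSelfDualBasis.basisExpansion_symm_mem (hα : IsSelfDualBasis α)
    {C : Submodule L (Fin n → L)}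
    (hdual : ∀ x : Fin n → L, (∀ y ∈ C, x ⬝ᵥ y = 0) → x ∈ C) {z : Fin (k * n) → F}
    (hz : ∀ y ∈ C, z ⬝ᵥ basisExpansion α n y = 0) : (basisExpansion α n).symm z ∈ C :=
  hdual _ fun _ hy => hα.dotProduct_eq_zero_of_forall_trace_eq_zero (fun y hy => by
    rw [← hα.basisExpansion_dotProduct, LinearEquiv.apply_symm_apply, hz y hy]) hy

end BasisExpansion

theorem two_mul_ncard_support_union {ι : Type*} [Fintype ι] (x y : ι → ZMod 2) :
    2 * ({i | x i ≠ 0} ∪ {i | y i ≠ 0}).ncard =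
      {i | x i ≠ 0}.ncard + {i | y i ≠ 0}.ncard + {i | (x + y) i ≠ 0}.ncard := by
  classical
  have ncard_eq_sum (P : ι → Prop) [DecidablePred P] :
      {i | P i}.ncard = ∑ i, if P i then 1 else 0 := by
    rw [Set.ncard_eq_toFinset_card', Set.toFinset_ofPred, Finset.card_filter]
  rw [← Set.ofPred_or, ncard_eq_sum, ncard_eq_sum, ncard_eq_sum, ncard_eq_sum, Finset.mul_sum,
    ← Finset.sum_add_distrib, ← Finset.sum_add_distrib]
  refine Finset.sum_congr rfl fun i _ => ?_
  rw [Pi.add_apply]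
  generalize x i = a; generalize y i = b
  revert a b; decide

section TwistedCode

variable {K V : Type*} [Field K] [AddCommGroup V] [Module K V]

def twistedCode (C C' : Submodule K V) (μ : K) : Submodule K (V × V) :=
  LinearMap.range (((LinearMap.fst K V V).prod (μ • LinearMap.fst K V V + LinearMap.snd K V V)) ∘ₗ
    C'.subtype.prodMap C.subtype)

variable {C C' : Submodule K V} {μ : K}

theorem mem_twistedCode {a b : V} : (a, b) ∈ twistedCode C C' μ ↔ a ∈ C' ∧ b - μ • a ∈ C := by
  constructor
  · rintro ⟨⟨a, c⟩, hac⟩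
    simp only [LinearMap.coe_comp, Function.comp_apply, LinearMap.prodMap_apply,
      Submodule.coe_subtype, LinearMap.prod_apply, Function.prod, Prod.mk.injEq] at hac
    obtain ⟨rfl, rfl⟩ := hac
    simp
  · rintro ⟨ha, hb⟩
    exact ⟨(⟨a, ha⟩, ⟨b - μ • a, hb⟩), by simp⟩

theorem finrank_twistedCode [FiniteDimensional K V] (C C' : Submodule K V) (μ : K) :
    finrank K (twistedCode C C' μ) = finrank K C' + finrank K C := by
  rw [twistedCode, LinearMap.finrank_range_of_inj, Module.finrank_prod]
  rintro ⟨a, c⟩ ⟨a', c'⟩ h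
  obtain ⟨rfl, h⟩ : a = a' ∧ μ • (a : V) + c = μ • (a' : V) + c' := by simpa using h
  simpa using h

theorem min_le_weight_add_weight_add_weight_of_mem_twistedCode (hCC' : C ≤ C') (hμ : μ ≠ 0)
    (hμ' : 1 + μ ≠ 0) {w : V → ℕ} {d d' : ℕ} (hd : ∀ c ∈ C, c ≠ 0 → d ≤ w c)
    (hd' : ∀ c ∈ C', c ≠ 0 → d' ≤ w c) {a b : V} (hab : (a, b) ∈ twistedCode C C' μ)
    (hne : (a, b) ≠ 0) : min (2 * d) (3 * d') ≤ w a + w b + w (a + b) := by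
  obtain ⟨ha, hb⟩ := mem_twistedCode.mp hab
  have hb_eq : b = μ • a + (b - μ • a) := by abel
  by_cases haC : a ∈ C
  · have hbC : b ∈ C := hb_eq ▸ C.add_mem (C.smul_mem μ haC) hb
    have habC : a + b ∈ C := C.add_mem haC hbC
    refine (min_le_left _ _).trans ?_
    rcases eq_or_ne a 0 with rfl | ha0
    · have hb0 : b ≠ 0 := fun h => hne (by simp [h])
      have := hd b hbC hb0
      simp only [zero_add]
      omega
    rcases eq_or_ne b 0 with rfl | hb0
    · have := hd a haC ha0
      simp only [add_zero]
      omega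
    have := hd a haC ha0
    have := hd b hbC hb0
    omega
  · have not_mem (t : K) (ht : t ≠ 0) (c : V) (hc : c ∈ C) : t • a + c ∉ C := fun h =>
      haC ((C.smul_mem_iff ht).mp (by simpa using C.sub_mem h hc))
    have hbC : b ∉ C := hb_eq ▸ not_mem μ hμ _ hb
    have habC : a + b ∉ C := by
      rw [show a + b = (1 + μ) • a + (b - μ • a) by rw [add_smul, one_smul]; abel]
      exact not_mem _ hμ' _ hb
    have hb' : b ∈ C' := hb_eq ▸ C'.add_mem (C'.smul_mem μ ha) (hCC' hb)
    have := hd' a ha (fun h => haC (h ▸ C.zero_mem))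
    have := hd' b hb' (fun h => hbC (h ▸ C.zero_mem))
    have := hd' (a + b) (C'.add_mem ha hb') (fun h => habC (h ▸ C.zero_mem))
    exact (min_le_right _ _).trans (by omega)

end TwistedCode

theorem exists_ne_zero_and_one_add_ne_zero (F L : Type*) [Field F] [Ring L] [Nontrivial L]
    [Algebra F L] (h : finrank F L ≠ 1) : ∃ μ : L, μ ≠ 0 ∧ 1 + μ ≠ 0 := by
  obtain ⟨μ, hμ⟩ : ∃ μ : L, μ ∉ (⊥ : Subalgebra F L) := by
    by_contra! hall
    exact h (Subalgebra.bot_eq_top_iff_finrank_eq_one.mp (eq_top_iff.mpr fun x _ => hall x))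
  refine ⟨μ, fun h0 => hμ (h0 ▸ zero_mem _), fun h1 => hμ ?_⟩
  rw [eq_neg_of_add_eq_zero_right h1]
  exact neg_mem (one_mem _)

section ExpandedTwistedCode

variable {F L : Type*} [Field F] [Field L] [Algebra F L] {k n : ℕ}

noncomputable def expandedTwistedCode (α : Basis (Fin k) F L) (C C' : Submodule L (Fin n → L))
    (μ : L) : Submodule F ((Fin (k * n) → F) × (Fin (k * n) → F)) :=
  ((twistedCode C C' μ).restrictScalars F).map
    ((basisExpansion α n).prodCongr (basisExpansion α n) : _ →ₗ[F] _)

variable {α : Basis (Fin k) F L} {C C' : Submodule L (Fin n → L)} {μ : L}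

theorem finrank_expandedTwistedCode :
    finrank F (expandedTwistedCode α C C' μ) = finrank F L * (finrank L C' + finrank L C) := by
  rw [expandedTwistedCode, LinearEquiv.finrank_map_eq]
  change finrank F (twistedCode C C' μ) = _
  rw [← Module.finrank_mul_finrank F L, finrank_twistedCode]

theorem IsSelfDualBasis.symplecticDual_expandedTwistedCode_subset (hα : IsSelfDualBasis α)
    (hCC' : C ≤ C') (hdual : ∀ x : Fin n → L, (∀ y ∈ C, x ⬝ᵥ y = 0) → x ∈ C) :
    {z : (Fin (k * n) → F) × (Fin (k * n) → F) |
        ∀ c ∈ expandedTwistedCode α C C' μ, ∑ j, (z.1 j * c.2 j + c.1 j * z.2 j) = 0} ⊆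
      expandedTwistedCode α C C' μ := by
  set E := basisExpansion α n
  rintro ⟨z₁, z₂⟩ hz
  have h₁ : E.symm z₁ ∈ C := hα.basisExpansion_symm_mem hdual fun y hy => by
    simpa [dotProduct] using
      hz (0, E y) ⟨(0, y), mem_twistedCode.mpr ⟨zero_mem _, by simpa using hy⟩, by simp [E]⟩
  have h₂ : E.symm z₂ ∈ C := hα.basisExpansion_symm_mem hdual fun y hy => by
    simpa [dotProduct, mul_comm] using hz (E y, 0)
      ⟨(y, 0), mem_twistedCode.mpr ⟨hCC' hy, by simpa using C.smul_mem (-μ) hy⟩, by simp [E]⟩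
  exact ⟨(E.symm z₁, E.symm z₂),
    mem_twistedCode.mpr ⟨hCC' h₁, C.sub_mem h₂ (C.smul_mem μ h₁)⟩, by simp [E]⟩

end ExpandedTwistedCode

theorem min_le_two_mul_ncard_support_union_of_mem_expandedTwistedCode {L : Type*} [Field L]
    [Algebra (ZMod 2) L] {k n : ℕ} {α : Basis (Fin k) (ZMod 2) L}
    {C C' : Submodule L (Fin n → L)} (hCC' : C ≤ C') {μ : L} (hμ : μ ≠ 0) (hμ' : 1 + μ ≠ 0)
    {d d' : ℕ} (hd : ∀ c ∈ C, c ≠ 0 → d ≤ {i | c i ≠ 0}.ncard)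
    (hd' : ∀ c ∈ C', c ≠ 0 → d' ≤ {i | c i ≠ 0}.ncard)
    {z : (Fin (k * n) → ZMod 2) × (Fin (k * n) → ZMod 2)} (hz : z ∈ expandedTwistedCode α C C' μ)
    (hz0 : z ≠ 0) : min (2 * d) (3 * d') ≤ 2 * ({j | z.1 j ≠ 0} ∪ {j | z.2 j ≠ 0}).ncard := by
  obtain ⟨⟨a, b⟩, hab, rfl⟩ := hz
  rw [LinearEquiv.coe_coe, LinearEquiv.prodCongr_apply, two_mul_ncard_support_union, ← map_add]
  have expand_le {D : Submodule L (Fin n → L)} {δ : ℕ}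
      (hδ : ∀ c ∈ D, c ≠ 0 → δ ≤ {i | c i ≠ 0}.ncard) (c) (hc : c ∈ D) (hc0 : c ≠ 0) :
      δ ≤ {p | basisExpansion α n c p ≠ 0}.ncard :=
    (hδ c hc hc0).trans (ncard_support_le_ncard_support_basisExpansion c)
  exact min_le_weight_add_weight_add_weight_of_mem_twistedCode hCC' hμ hμ' (expand_le hd)
    (expand_le hd') hab (by rintro h; simp [h] at hz0)

theorem composite_construction_general
    (m n : ℕ)
    (K : Type*) [Field K] [Algebra (ZMod 2) K]
    (hbasis : ∃ α : Module.Basis (Fin (2 * m)) (ZMod 2) K,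
      ∀ i j, Algebra.trace (ZMod 2) K (α i * α j) = if i = j then 1 else 0)
    (C C' : Submodule K (Fin n → K)) (hCC' : C ≤ C')
    (hdual : ∀ x : Fin n → K, (∀ y ∈ C, ∑ i, x i * y i = 0) → x ∈ C)
    (d d' : ℕ)
    (hd : d = sInf {w | ∃ x ∈ C, x ≠ (0 : Fin n → K) ∧
        w = {i | x i ≠ 0}.ncard})
    (hd' : d' = sInf {w | ∃ x ∈ C', x ≠ (0 : Fin n → K) ∧
        w = {i | x i ≠ 0}.ncard}) :
    ∃ F : Submodule (ZMod 2)
        ((Fin (2 * m * n) → ZMod 2) × (Fin (2 * m * n) → ZMod 2)),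
      ({z : (Fin (2 * m * n) → ZMod 2) × (Fin (2 * m * n) → ZMod 2) |
          ∀ c ∈ F, ∑ j, (z.1 j * c.2 j + c.1 j * z.2 j) = 0} ⊆ (F : Set _)) ∧
      Module.finrank (ZMod 2) F =
        2 * m * (Module.finrank K C + Module.finrank K C') ∧
      ∀ z ∈ F, z ≠ 0 →
        min (2 * d) (3 * d') ≤ 2 * ({j | z.1 j ≠ 0} ∪ {j | z.2 j ≠ 0}).ncard := by
  obtain ⟨α, hα : IsSelfDualBasis α⟩ := hbasis
  have hK : finrank (ZMod 2) K = 2 * m := by rw [finrank_eq_card_basis α, Fintype.card_fin]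
  obtain ⟨μ, hμ, hμ'⟩ := exists_ne_zero_and_one_add_ne_zero (ZMod 2) K (by omega)
  have le_weight {D : Submodule K (Fin n → K)} {δ : ℕ}
      (hδ : δ = sInf {w | ∃ x ∈ D, x ≠ 0 ∧ w = {i | x i ≠ 0}.ncard}) (c) (hc : c ∈ D)
      (hc0 : c ≠ 0) : δ ≤ {i | c i ≠ 0}.ncard :=
    hδ ▸ Nat.sInf_le ⟨c, hc, hc0, rfl⟩
  refine ⟨expandedTwistedCode α C C' μ, hα.symplecticDual_expandedTwistedCode_subset hCC' hdual,
    ?_, fun z hz hz0 => min_le_two_mul_ncard_support_union_of_mem_expandedTwistedCode hCC' hμ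
      hμ' (le_weight hd) (le_weight hd') hz hz0⟩
  rw [finrank_expandedTwistedCode, hK, add_comm]

/-- Composite construction of Section 5: binary expansion in a self-dual
basis (Kasami–Lin) followed by Steane's construction. From a triple
`C' ⊇ C ⊇ C^⊥` of codes over a field `K` with `2^(2m)` elements one obtains
a large symplectic code `F ⊆ 𝔽₂^N × 𝔽₂^N`, `N = 2mn`, of dimension
`2m(dim C + dim C')` whose nonzero elements `(x,y)` satisfy
`2·|supp x ∪ supp y| ≥ min(2d, 3d')`. -/
theorem composite_construction
    (m n : ℕ) (hm : 1 ≤ m) (hn : 1 ≤ n)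
    (K : Type*) [Field K] [Fintype K] [Algebra (ZMod 2) K]
    (hcard : Fintype.card K = 2 ^ (2 * m))
    (hbasis : ∃ α : Module.Basis (Fin (2 * m)) (ZMod 2) K,
      ∀ i j, Algebra.trace (ZMod 2) K (α i * α j) = if i = j then 1 else 0)
    (C C' : Submodule K (Fin n → K)) (hCC' : C ≤ C')
    (hdual : ∀ x : Fin n → K, (∀ y ∈ C, ∑ i, x i * y i = 0) → x ∈ C)
    (hdim : Module.finrank K C + 1 ≤ Module.finrank K C')
    (d d' : ℕ)
    (hd : d = sInf {w | ∃ x ∈ C, x ≠ (0 : Fin n → K) ∧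
        w = {i | x i ≠ 0}.ncard})
    (hd' : d' = sInf {w | ∃ x ∈ C', x ≠ (0 : Fin n → K) ∧
        w = {i | x i ≠ 0}.ncard}) :
    ∃ F : Submodule (ZMod 2)
        ((Fin (2 * m * n) → ZMod 2) × (Fin (2 * m * n) → ZMod 2)),
      ({z : (Fin (2 * m * n) → ZMod 2) × (Fin (2 * m * n) → ZMod 2) |
          ∀ c ∈ F, ∑ j, (z.1 j * c.2 j + c.1 j * z.2 j) = 0} ⊆ (F : Set _)) ∧
      Module.finrank (ZMod 2) F =
        2 * m * (Module.finrank K C + Module.finrank K C') ∧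
      ∀ z ∈ F, z ≠ 0 →
        min (2 * d) (3 * d') ≤ 2 * ({j | z.1 j ≠ 0} ∪ {j | z.2 j ≠ 0}).ncard :=
  composite_construction_general m n K hbasis C C' hCC' hdual d d' hd hd'
end
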